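/- arXiv:1507.06193 — 5 statements merged into one kernel-verified Lean document; each statement's English description precedes it below -/
import Mathlib

section
/- Let d ≥ 1 and let X = (X_Q, X_P) : ℝ^d × ℝ^d → ℝ^d × ℝ^d be a continuously differentiable vector field satisfying the Hamiltonian integrability conditions. Define H : ℝ^d × ℝ^d → ℝ by H(q,p) = ∫₀¹ ( ⟨p, X_Q(λq, λp)⟩ − ⟨q, X_P(λq, λp)⟩ ) dλ. Then for all (q,p) ∈ ℝ^d × ℝ^d, the partial gradient of H with respect to p satisfies ∂H/∂p (q,p) = X_Q(q,p). -/
noncomputable section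

/-- Partial derivative of a scalar function on `ℝ^d × ℝ^d` with respect to `q_k`. -/
def pdq (d : ℕ) (f : ((Fin d → ℝ) × (Fin d → ℝ)) → ℝ) (k : Fin d)
    (z : (Fin d → ℝ) × (Fin d → ℝ)) : ℝ :=
  fderiv ℝ f z ((Pi.single k 1 : Fin d → ℝ), 0)

/-- Partial derivative of a scalar function on `ℝ^d × ℝ^d` with respect to `p_k`. -/
def pdp (d : ℕ) (f : ((Fin d → ℝ) × (Fin d → ℝ)) → ℝ) (k : Fin d)
    (z : (Fin d → ℝ) × (Fin d → ℝ)) : ℝ :=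
  fderiv ℝ f z (0, (Pi.single k 1 : Fin d → ℝ))

/-- The Hamiltonian integrability conditions for a vector field
`X = (X_Q, X_P) : ℝ^d × ℝ^d → ℝ^d × ℝ^d`. -/
def HamIntegrability (d : ℕ)
    (XQ XP : ((Fin d → ℝ) × (Fin d → ℝ)) → (Fin d → ℝ)) : Prop :=
  ∀ z : (Fin d → ℝ) × (Fin d → ℝ), ∀ i k : Fin d,
    pdq d (fun w => XQ w i) k z + pdp d (fun w => XP w k) i z = 0 ∧
    pdp d (fun w => XQ w i) k z = pdp d (fun w => XQ w k) i z ∧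
    pdq d (fun w => XP w i) k z = pdq d (fun w => XP w k) i z

/-! Differentiating under the integral sign, the integrability conditions (symmetry of `∂X_Q/∂p`
and `∂X_Q/∂q = -(∂X_P/∂p)ᵀ`) turn the `p_i`-derivative of the integrand at `(λ, z)` into
`X_Q,i(λz) + λ · DX_Q,i(λz) z`, which is `d/dλ (λ X_Q,i(λz))`; so the integral over `[0, 1]`
is `X_Q,i(z)`. -/

open Set Filter Topology intervalIntegral

theorem IsCompact.exists_bound_eventually_of_continuous {X Y F : Type*} [TopologicalSpace X]
    [TopologicalSpace Y] [SeminormedAddCommGroup F] {K : Set Y} (hK : IsCompact K)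
    {f : X × Y → F} (hf : Continuous f) (x₀ : X) :
    ∃ C, ∀ᶠ x in 𝓝 x₀, ∀ y ∈ K, ‖f (x, y)‖ ≤ C := by
  obtain ⟨C, hC⟩ := hK.exists_bound_of_continuousOn
    (hf.comp (continuous_const.prodMk continuous_id)).continuousOn
  refine ⟨C + 1, hK.eventually_forall_of_forall_eventually fun y hy => ?_⟩
  have hlt : ‖f (x₀, y)‖ < C + 1 := (hC y hy).trans_lt (lt_add_one C)
  exact (hf.norm.continuousAt.eventually_lt continuousAt_const hlt).mono fun _ h => h.le

section ParametricIntegral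

variable {E F : Type*} [NormedAddCommGroup E] [NormedSpace ℝ E]
  [NormedAddCommGroup F] [NormedSpace ℝ F] {G : ℝ → E → F}

theorem continuous_fderiv_of_contDiff_uncurry (hG : ContDiff ℝ 1 (Function.uncurry G)) :
    Continuous fun p : E × ℝ => fderiv ℝ (G p.2) p.1 :=
  (ContDiff.fderiv (f := fun p : E × ℝ => G p.2) (n := 0)
    (hG.comp (contDiff_fst.snd.prodMk contDiff_snd)) contDiff_fst le_rfl).continuous

theorem hasFDerivAt_intervalIntegral_of_contDiff (hG : ContDiff ℝ 1 (Function.uncurry G))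
    (a b : ℝ) (x₀ : E) :
    HasFDerivAt (fun x => ∫ t in a..b, G t x) (∫ t in a..b, fderiv ℝ (G t) x₀) x₀ := by
  have hΦ := continuous_fderiv_of_contDiff_uncurry hG
  have hGx : ∀ x, Continuous fun t => G t x :=
    fun x => hG.continuous.comp (continuous_id.prodMk continuous_const)
  have hdiff : ∀ t x, DifferentiableAt ℝ (G t) x := fun t x =>
    (hG.differentiable one_ne_zero).comp (differentiable_const t |>.prodMk differentiable_id) x
  obtain ⟨C, hC⟩ := (isCompact_uIcc (a := a) (b := b)).exists_bound_eventually_of_continuous hΦ x₀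
  exact hasFDerivAt_integral_of_dominated_of_fderiv_le (bound := fun _ => C) hC
    (.of_forall fun x => (hGx x).aestronglyMeasurable) ((hGx x₀).intervalIntegrable a b)
    (hΦ.comp (continuous_const.prodMk continuous_id)).aestronglyMeasurable
    (.of_forall fun t ht x hx => hx t (uIoc_subset_uIcc ht)) intervalIntegrable_const
    (.of_forall fun t _ x _ => (hdiff t x).hasFDerivAt)

theorem fderiv_intervalIntegral_apply_of_contDiff (hG : ContDiff ℝ 1 (Function.uncurry G))
    (a b : ℝ) (x₀ v : E) :
    fderiv ℝ (fun x => ∫ t in a..b, G t x) x₀ v = ∫ t in a..b, fderiv ℝ (G t) x₀ v := by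
  rw [(hasFDerivAt_intervalIntegral_of_contDiff hG a b x₀).fderiv,
    ContinuousLinearMap.intervalIntegral_apply]
  exact ((continuous_fderiv_of_contDiff_uncurry hG).comp
    (continuous_const.prodMk continuous_id)).intervalIntegrable a b

end ParametricIntegral

theorem integral_comp_smul_add_smul_fderiv {E F : Type*} [NormedAddCommGroup E]
    [NormedSpace ℝ E] [NormedAddCommGroup F] [NormedSpace ℝ F] [CompleteSpace F] {f : E → F}
    (hf : ContDiff ℝ 1 f) (z : E) :
    ∫ t in (0 : ℝ)..1, (f (t • z) + t • fderiv ℝ f (t • z) z) = f z := by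
  have hline (t : ℝ) : HasDerivAt (fun s : ℝ => s • z) z t := by
    simpa using (hasDerivAt_id t).smul_const z
  have hderiv (t : ℝ) :
      HasDerivAt (fun s : ℝ => s • f (s • z)) (f (t • z) + t • fderiv ℝ f (t • z) z) t := by
    simpa [add_comm, Function.comp_def] using (hasDerivAt_id' t).fun_smul
      ((hf.differentiable one_ne_zero _).hasFDerivAt.comp_hasDerivAt t (hline t))
  have hcont : Continuous fun t : ℝ => f (t • z) + t • fderiv ℝ f (t • z) z := by
    have := hf.continuous_fderiv one_ne_zero
    fun_prop
  rw [integral_eq_sub_of_hasDerivAt (fun t _ => hderiv t) (hcont.intervalIntegrable 0 1)]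
  simp

theorem hasFDerivAt_sum_mul_comp_smul {E ι : Type*} [NormedAddCommGroup E] [NormedSpace ℝ E]
    [Fintype ι] (ℓ : E →L[ℝ] ι → ℝ) {f : E → ι → ℝ} {t : ℝ} {z : E}
    (hf : ∀ k, DifferentiableAt ℝ (fun w => f w k) (t • z)) :
    HasFDerivAt (fun y => ∑ k, ℓ y k * f (t • y) k)
      (∑ k, (ℓ z k • t • fderiv ℝ (fun w => f w k) (t • z)
        + f (t • z) k • (ContinuousLinearMap.proj k ∘L ℓ))) z := by
  refine HasFDerivAt.fun_sum fun k _ => ?_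
  have hcomp : HasFDerivAt (fun y => f (t • y) k) (t • fderiv ℝ (fun w => f w k) (t • z)) z := by
    simpa [Function.comp_def] using (hf k).hasFDerivAt.comp z ((hasFDerivAt_id z).const_smul t)
  exact (ContinuousLinearMap.proj k ∘L ℓ).hasFDerivAt.mul hcomp

section Hamiltonian

variable {d : ℕ}

theorem fderiv_apply_eq_sum_pdq_add_sum_pdp (φ : ((Fin d → ℝ) × (Fin d → ℝ)) → ℝ)
    (w v : (Fin d → ℝ) × (Fin d → ℝ)) :
    fderiv ℝ φ w v = ∑ k, v.1 k * pdq d φ k w + ∑ k, v.2 k * pdp d φ k w := by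
  have hv : v = ∑ k, v.1 k • ((Pi.single k 1 : Fin d → ℝ), (0 : Fin d → ℝ))
      + ∑ k, v.2 k • ((0 : Fin d → ℝ), (Pi.single k 1 : Fin d → ℝ)) := by
    ext j <;> simp [Prod.fst_sum, Prod.snd_sum, Finset.sum_apply, Pi.single_apply]
  conv_lhs => rw [hv]
  simp only [map_add, map_sum, map_smul, smul_eq_mul, pdq, pdp]

def hamiltonianIntegrand (XQ XP : ((Fin d → ℝ) × (Fin d → ℝ)) → (Fin d → ℝ)) (t : ℝ)
    (z : (Fin d → ℝ) × (Fin d → ℝ)) : ℝ :=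
  (∑ k, z.2 k * XQ (t • z) k) - ∑ k, z.1 k * XP (t • z) k

variable {XQ XP : ((Fin d → ℝ) × (Fin d → ℝ)) → (Fin d → ℝ)}

theorem HamIntegrability.fderiv_apply_eq (hint : HamIntegrability d XQ XP)
    (w z : (Fin d → ℝ) × (Fin d → ℝ)) (i : Fin d) :
    fderiv ℝ (fun w => XQ w i) w z
      = ∑ k, z.2 k * pdp d (fun w => XQ w k) i w - ∑ k, z.1 k * pdp d (fun w => XP w k) i w := by
  rw [fderiv_apply_eq_sum_pdq_add_sum_pdp, sub_eq_neg_add, ← Finset.sum_neg_distrib]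
  congr 1 <;> refine Finset.sum_congr rfl fun k _ => ?_
  · rw [eq_neg_iff_add_eq_zero, ← mul_add, (hint w i k).1, mul_zero]
  · rw [(hint w i k).2.1]

theorem contDiff_uncurry_hamiltonianIntegrand (hXQ : ContDiff ℝ 1 XQ) (hXP : ContDiff ℝ 1 XP) :
    ContDiff ℝ 1 (Function.uncurry (hamiltonianIntegrand XQ XP)) := by
  unfold hamiltonianIntegrand
  fun_prop

theorem pdp_hamiltonianIntegrand (hXQ : Differentiable ℝ XQ) (hXP : Differentiable ℝ XP)
    (hint : HamIntegrability d XQ XP) (t : ℝ) (z : (Fin d → ℝ) × (Fin d → ℝ)) (i : Fin d) :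
    pdp d (hamiltonianIntegrand XQ XP t) i z
      = XQ (t • z) i + t * fderiv ℝ (fun w => XQ w i) (t • z) z := by
  have hQ := hasFDerivAt_sum_mul_comp_smul (ContinuousLinearMap.snd ℝ _ _) (f := XQ) (t := t)
    (z := z) fun k => (differentiable_pi.mp hXQ k) _
  have hP := hasFDerivAt_sum_mul_comp_smul (ContinuousLinearMap.fst ℝ _ _) (f := XP) (t := t)
    (z := z) fun k => (differentiable_pi.mp hXP k) _
  have hH : HasFDerivAt (hamiltonianIntegrand XQ XP t) _ z := hQ.sub hP
  rw [pdp, hH.fderiv, hint.fderiv_apply_eq]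
  simp only [pdp, sub_apply, add_apply, sum_apply, smul_apply, smul_eq_mul,
    ContinuousLinearMap.comp_apply, ContinuousLinearMap.coe_snd', ContinuousLinearMap.coe_fst',
    ContinuousLinearMap.proj_apply, Pi.zero_apply, Pi.single_apply, mul_ite, mul_one, mul_zero,
    Finset.sum_add_distrib, Finset.sum_ite_eq', Finset.mem_univ, if_true, Finset.sum_const_zero,
    add_zero, mul_left_comm _ t, ← Finset.mul_sum]
  ring

end Hamiltonian

theorem stmt2_general (d : ℕ)
    (XQ XP : ((Fin d → ℝ) × (Fin d → ℝ)) → (Fin d → ℝ))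
    (hXQ : ContDiff ℝ 1 XQ) (hXP : ContDiff ℝ 1 XP)
    (hint : HamIntegrability d XQ XP)
    (H : ((Fin d → ℝ) × (Fin d → ℝ)) → ℝ)
    (hH : ∀ z : (Fin d → ℝ) × (Fin d → ℝ),
      H z = ∫ l in (0:ℝ)..1,
        ((∑ i, z.2 i * XQ (l • z.1, l • z.2) i) - ∑ i, z.1 i * XP (l • z.1, l • z.2) i)) :
    ∀ (z : (Fin d → ℝ) × (Fin d → ℝ)) (i : Fin d), pdp d H i z = XQ z i := by
  intro z i
  have hH' : H = fun x => ∫ t in (0 : ℝ)..1, hamiltonianIntegrand XQ XP t x := funext hH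
  calc pdp d H i z = ∫ t in (0 : ℝ)..1, pdp d (hamiltonianIntegrand XQ XP t) i z := by
        rw [hH', pdp]
        exact fderiv_intervalIntegral_apply_of_contDiff
          (contDiff_uncurry_hamiltonianIntegrand hXQ hXP) 0 1 z _
    _ = ∫ t in (0 : ℝ)..1, (XQ (t • z) i + t • fderiv ℝ (fun w => XQ w i) (t • z) z) :=
        integral_congr fun t _ => pdp_hamiltonianIntegrand (hXQ.differentiable one_ne_zero)
          (hXP.differentiable one_ne_zero) hint t z i
    _ = XQ z i := integral_comp_smul_add_smul_fderiv (contDiff_pi.mp hXQ i) z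

/-- for a C¹ vector field satisfying the Hamiltonian integrability
conditions, the Hamiltonian `H(q,p) = ∫₀¹ (⟨p, X_Q(λq,λp)⟩ − ⟨q, X_P(λq,λp)⟩) dλ`
satisfies `∂H/∂p = X_Q`. -/
theorem stmt2 (d : ℕ) (hd : 1 ≤ d)
    (XQ XP : ((Fin d → ℝ) × (Fin d → ℝ)) → (Fin d → ℝ))
    (hXQ : ContDiff ℝ 1 XQ) (hXP : ContDiff ℝ 1 XP)
    (hint : HamIntegrability d XQ XP)
    (H : ((Fin d → ℝ) × (Fin d → ℝ)) → ℝ)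
    (hH : ∀ z : (Fin d → ℝ) × (Fin d → ℝ),
      H z = ∫ l in (0:ℝ)..1,
        ((∑ i, z.2 i * XQ (l • z.1, l • z.2) i) - ∑ i, z.1 i * XP (l • z.1, l • z.2) i)) :
    ∀ (z : (Fin d → ℝ) × (Fin d → ℝ)) (i : Fin d), pdp d H i z = XQ z i :=
  stmt2_general d XQ XP hXQ hXP hint H hH
end
end

section
/- Let d ≥ 1 and let X_{Q,D}, X_{P,D} : ℝ^d × ℝ^d → ℝ^d and X_{Q,S}, X_{P,S} : ℝ^d × ℝ^d → ℝ^{d×n} all be continuously differentiable. Then the following are equivalent: (a) there exist twice continuously differentiable H_D : ℝ^d × ℝ^d → ℝ and H_S : ℝ^d × ℝ^d → ℝ^n with X_{Q,D} = ∂H_D/∂p, X_{P,D} = −∂H_D/∂q, (X_{Q,S})_{ij} = ∂(H_S)_j/∂p_i and (X_{P,S})_{ij} = −∂(H_S)_j/∂q_i; (b) the drift pair (X_{Q,D}, X_{P,D}) satisfies the Hamiltonian integrability conditions and the diffusion pair (X_{Q,S}, X_{P,S}) satisfies, for all (q,p), all i,k ∈ {1,…,d} and all j ∈ {1,…,n}: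 ∂(X_{Q,S})_{ij}/∂q_k + ∂(X_{P,S})_{kj}/∂p_i = 0, ∂(X_{Q,S})_{ij}/∂p_k = ∂(X_{Q,S})_{kj}/∂p_i, and ∂(X_{P,S})_{ij}/∂q_k = ∂(X_{P,S})_{kj}/∂q_i. Moreover, in the affirmative case one may take H_D(q,p) = ∫₀¹ ( ⟨p, X_{Q,D}(λq,λp)⟩ − ⟨q, X_{P,D}(λq,λp)⟩ ) dλ and (H_S)_j(q,p) = ∫₀¹ ( Σ_i p_i (X_{Q,S})_{ij}(λq,λp) − Σ_i q_i (X_{P,S})_{ij}(λq,λp) ) dλ. -/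
/-!
Write `Ω(x, z) = ⟨z_p, x_q⟩ - ⟨z_q, x_p⟩` for the symplectic pairing on `ℝ^d × ℝ^d`. A vector
field `X = (X_Q, X_P)` has Hamiltonian `H` exactly when `dH = Ω(X, ·)`, and the Hamiltonian
integrability conditions say precisely that the 1-form `ω = Ω(X, ·)` has a symmetric derivative,
i.e. is closed. Necessity is the symmetry of the second derivative of a `C²` Hamiltonian.
Sufficiency is the Poincaré lemma on the star-shaped space `ℝ^{2d}`: the radial potential
`H(z) = ∫₀¹ ω(t z) z dt`, which is the candidate Hamiltonian, has derivative `ω`, because the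
symmetry of `Dω` turns the `z`-derivative of the integrand into `d/dt (t ω(t z))`. The diffusion
coefficients are treated column by column, each column being a vector field of the drift kind.
-/

noncomputable section

/-- The stochastic integrability conditions for the purely stochastic part, for
matrix-valued maps `X_{Q,S}, X_{P,S} : ℝ^d × ℝ^d → ℝ^{d×n}`. -/
def StochIntegrability (d n : ℕ)
    (XQS XPS : ((Fin d → ℝ) × (Fin d → ℝ)) → Fin d → Fin n → ℝ) : Prop :=
  ∀ z : (Fin d → ℝ) × (Fin d → ℝ), ∀ i k : Fin d, ∀ j : Fin n,
    pdq d (fun w => XQS w i j) k z + pdp d (fun w => XPS w k j) i z = 0 ∧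
    pdp d (fun w => XQS w i j) k z = pdp d (fun w => XQS w k j) i z ∧
    pdq d (fun w => XPS w i j) k z = pdq d (fun w => XPS w k j) i z

/-- The candidate deterministic Hamiltonian. -/
def candidateHD (d : ℕ) (XQD XPD : ((Fin d → ℝ) × (Fin d → ℝ)) → (Fin d → ℝ))
    (z : (Fin d → ℝ) × (Fin d → ℝ)) : ℝ :=
  ∫ l in (0:ℝ)..1,
    ((∑ i, z.2 i * XQD (l • z.1, l • z.2) i) - ∑ i, z.1 i * XPD (l • z.1, l • z.2) i)

/-- The candidate stochastic Hamiltonian. -/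
def candidateHS (d n : ℕ)
    (XQS XPS : ((Fin d → ℝ) × (Fin d → ℝ)) → Fin d → Fin n → ℝ)
    (z : (Fin d → ℝ) × (Fin d → ℝ)) : Fin n → ℝ := fun j =>
  ∫ l in (0:ℝ)..1,
    ((∑ i, z.2 i * XQS (l • z.1, l • z.2) i j) - ∑ i, z.1 i * XPS (l • z.1, l • z.2) i j)

open Metric

theorem hasFDerivAt_intervalIntegral_of_continuous {E G : Type*} [NormedAddCommGroup E]
    [NormedSpace ℝ E] [ProperSpace E] [NormedAddCommGroup G] [NormedSpace ℝ G]
    {F : E → ℝ → G} {F' : E → ℝ → E →L[ℝ] G} (hF : ∀ z, Continuous (F z))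
    (hF' : Continuous (Function.uncurry F'))
    (hdiff : ∀ z t, HasFDerivAt (fun z => F z t) (F' z t) z) (a b : ℝ) (z₀ : E) :
    HasFDerivAt (fun z => ∫ t in a..b, F z t) (∫ t in a..b, F' z₀ t) z₀ := by
  obtain ⟨C, hC⟩ := ((isCompact_closedBall z₀ 1).prod isCompact_uIcc).exists_bound_of_continuousOn
    hF'.continuousOn
  exact intervalIntegral.hasFDerivAt_integral_of_dominated_of_fderiv_le (bound := fun _ => C)
    (ball_mem_nhds z₀ one_pos) (.of_forall fun z => (hF z).aestronglyMeasurable)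
    ((hF z₀).intervalIntegrable a b)
    (hF'.comp (Continuous.prodMk_right z₀)).aestronglyMeasurable
    (.of_forall fun t ht z hz =>
      hC (z, t) ⟨ball_subset_closedBall hz, Set.uIoc_subset_uIcc ht⟩)
    intervalIntegrable_const (.of_forall fun t _ z _ => hdiff z t)

theorem ContinuousLinearMap.apply_comm_of_basis {ι E F : Type*} [NormedAddCommGroup E]
    [NormedSpace ℝ E] [NormedAddCommGroup F] [NormedSpace ℝ F] (b : Module.Basis ι ℝ E)
    (B : E →L[ℝ] E →L[ℝ] F) (h : ∀ i j, B (b i) (b j) = B (b j) (b i)) (u v : E) :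
    B u v = B v u := by
  have hflip : B.flip = B := ContinuousLinearMap.toLinearMap₁₂_injective <|
    LinearMap.ext_basis b b fun i j => by simp [h]
  exact DFunLike.congr_fun (DFunLike.congr_fun hflip v) u

section RadialPotential

variable {E : Type*} [NormedAddCommGroup E] [NormedSpace ℝ E]

def radialPotential (ω : E → E →L[ℝ] ℝ) (z : E) : ℝ :=
  ∫ t in (0:ℝ)..1, ω (t • z) z

variable [ProperSpace E] {ω : E → E →L[ℝ] ℝ}

theorem hasFDerivAt_radialPotential (hω : ContDiff ℝ 1 ω)
    (hsymm : ∀ z u v, fderiv ℝ ω z u v = fderiv ℝ ω z v u) (z₀ : E) :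
    HasFDerivAt (radialPotential ω) (ω z₀) z₀ := by
  have hωd : Differentiable ℝ ω := hω.differentiable one_ne_zero
  have hωc : Continuous ω := hω.continuous
  have hdωc : Continuous (fderiv ℝ ω) := hω.continuous_fderiv one_ne_zero
  set F' : E → ℝ → E →L[ℝ] ℝ := fun z t => t • fderiv ℝ ω (t • z) z + ω (t • z) with hF'
  have hF'c : Continuous (Function.uncurry F') := by
    simp only [hF', Function.uncurry_def]; fun_prop
  have hdiff : ∀ z t, HasFDerivAt (fun z => ω (t • z) z) (F' z t) z := by
    intro z t
    have h := ((hωd (t • z)).hasFDerivAt.comp z ((hasFDerivAt_id z).const_smul t)).clm_apply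
      (hasFDerivAt_id z)
    refine h.congr_fderiv (ContinuousLinearMap.ext fun u => ?_)
    simp [F', hsymm (t • z) u z, add_comm]
  have hprimitive : ∀ t, HasDerivAt (fun t : ℝ => t • ω (t • z₀)) (F' z₀ t) t := by
    intro t
    have hs : HasDerivAt (fun t : ℝ => t • z₀) z₀ t := by
      simpa using (hasDerivAt_id t).smul_const z₀
    have h := (hasDerivAt_id t).smul ((hωd (t • z₀)).hasFDerivAt.comp_hasDerivAt t hs)
    exact h.congr_deriv (by simp [F', add_comm])
  have hintegral : ∫ t in (0:ℝ)..1, F' z₀ t = ω z₀ := by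
    rw [intervalIntegral.integral_eq_sub_of_hasDerivAt (fun t _ => hprimitive t)
      ((hF'c.comp (Continuous.prodMk_right z₀)).intervalIntegrable 0 1)]
    simp
  rw [← hintegral]
  exact hasFDerivAt_intervalIntegral_of_continuous
    (F := fun z t => ω (t • z) z) (fun z => by fun_prop) hF'c hdiff 0 1 z₀

theorem contDiff_radialPotential (hω : ContDiff ℝ 1 ω)
    (hsymm : ∀ z u v, fderiv ℝ ω z u v = fderiv ℝ ω z v u) :
    ContDiff ℝ 2 (radialPotential ω) := by
  have h := hasFDerivAt_radialPotential hω hsymm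
  rw [show (2 : WithTop ℕ∞) = 1 + 1 from one_add_one_eq_two.symm, contDiff_succ_iff_fderiv]
  exact ⟨fun z => (h z).differentiableAt, by simp, by rwa [funext fun z => (h z).fderiv]⟩

end RadialPotential

theorem fderiv_fderiv_apply_comm {E F : Type*} [NormedAddCommGroup E] [NormedSpace ℝ E]
    [NormedAddCommGroup F] [NormedSpace ℝ F] {H : E → F} (hH : ContDiff ℝ 2 H) (z a b : E) :
    fderiv ℝ (fun w => fderiv ℝ H w a) z b = fderiv ℝ (fun w => fderiv ℝ H w b) z a := by
  have hdH : Differentiable ℝ (fderiv ℝ H) :=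
    (hH.fderiv_right one_add_one_eq_two.le).differentiable one_ne_zero
  simp only [fderiv_clm_apply (hdH z) (differentiableAt_const _), fderiv_fun_const,
    Pi.zero_apply, ContinuousLinearMap.comp_zero, zero_add, ContinuousLinearMap.flip_apply]
  exact hH.contDiffAt.isSymmSndFDerivAt (by simp) b a

abbrev PhaseSpace (d : ℕ) := (Fin d → ℝ) × (Fin d → ℝ)

def symplecticPairing (d : ℕ) : PhaseSpace d →L[ℝ] PhaseSpace d →L[ℝ] ℝ :=
  LinearMap.toContinuousLinearMap <| LinearMap.toContinuousLinearMap.toLinearMap.comp <|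
    LinearMap.mk₂ ℝ (fun x z => z.2 ⬝ᵥ x.1 - z.1 ⬝ᵥ x.2)
      (fun x x' z => by simp only [Prod.fst_add, Prod.snd_add, dotProduct_add]; abel)
      (fun c x z => by simp only [Prod.smul_fst, Prod.smul_snd, dotProduct_smul, smul_sub])
      (fun x z z' => by simp only [Prod.fst_add, Prod.snd_add, add_dotProduct]; abel)
      (fun c x z => by simp only [Prod.smul_fst, Prod.smul_snd, smul_dotProduct, smul_sub])

section PhaseSpace

variable {d : ℕ}

@[simp]
theorem symplecticPairing_apply (x z : PhaseSpace d) :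
    symplecticPairing d x z = z.2 ⬝ᵥ x.1 - z.1 ⬝ᵥ x.2 := rfl

theorem symplecticPairing_single_fst (x : PhaseSpace d) (k : Fin d) :
    symplecticPairing d x (Pi.single k 1, 0) = -x.2 k := by
  simp

theorem symplecticPairing_single_snd (x : PhaseSpace d) (k : Fin d) :
    symplecticPairing d x (0, Pi.single k 1) = x.1 k := by
  simp

def symplecticOneForm (XQ XP : PhaseSpace d → Fin d → ℝ) (w : PhaseSpace d) :
    PhaseSpace d →L[ℝ] ℝ :=
  symplecticPairing d (XQ w, XP w)

def IsHamiltonianVectorField (H : PhaseSpace d → ℝ) (XQ XP : PhaseSpace d → Fin d → ℝ) : Prop :=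
  ∀ z i, XQ z i = pdp d H i z ∧ XP z i = -pdq d H i z

theorem pdq_eq_fderiv_apply {X : PhaseSpace d → Fin d → ℝ} {z : PhaseSpace d}
    (hX : DifferentiableAt ℝ X z) (i k : Fin d) :
    pdq d (fun w => X w i) k z = fderiv ℝ X z (Pi.single k 1, 0) i := by
  rw [pdq, fderiv_apply hX]; rfl

theorem pdp_eq_fderiv_apply {X : PhaseSpace d → Fin d → ℝ} {z : PhaseSpace d}
    (hX : DifferentiableAt ℝ X z) (i k : Fin d) :
    pdp d (fun w => X w i) k z = fderiv ℝ X z (0, Pi.single k 1) i := by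
  rw [pdp, fderiv_apply hX]; rfl

theorem contDiff_symplecticOneForm {XQ XP : PhaseSpace d → Fin d → ℝ} (hXQ : ContDiff ℝ 1 XQ)
    (hXP : ContDiff ℝ 1 XP) : ContDiff ℝ 1 (symplecticOneForm XQ XP) :=
  (symplecticPairing d).contDiff.comp (hXQ.prodMk hXP)

theorem fderiv_symplecticOneForm_comm {XQ XP : PhaseSpace d → Fin d → ℝ}
    (hXQ : Differentiable ℝ XQ) (hXP : Differentiable ℝ XP) (hint : HamIntegrability d XQ XP)
    (z u v : PhaseSpace d) :
    fderiv ℝ (symplecticOneForm XQ XP) z u v = fderiv ℝ (symplecticOneForm XQ XP) z v u := by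
  have hD : fderiv ℝ (symplecticOneForm XQ XP) z =
      (symplecticPairing d).comp ((fderiv ℝ XQ z).prod (fderiv ℝ XP z)) :=
    ((symplecticPairing d).hasFDerivAt.comp z
      ((hXQ z).hasFDerivAt.prodMk (hXP z).hasFDerivAt)).fderiv
  refine ContinuousLinearMap.apply_comm_of_basis
    ((Pi.basisFun ℝ (Fin d)).prod (Pi.basisFun ℝ (Fin d))) _ (fun a b => ?_) u v
  rcases a with i | i <;> rcases b with k | k <;>
    simp only [hD, Module.Basis.prod_apply, LinearMap.coe_inl, LinearMap.coe_inr, Sum.elim_inl,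
      Sum.elim_inr, Function.comp_apply, Pi.basisFun_apply, ContinuousLinearMap.comp_apply,
      ContinuousLinearMap.prod_apply, symplecticPairing_apply, zero_dotProduct, single_dotProduct,
      one_mul, zero_sub, sub_zero, neg_inj, ← pdq_eq_fderiv_apply (hXQ z),
      ← pdp_eq_fderiv_apply (hXQ z), ← pdq_eq_fderiv_apply (hXP z), ← pdp_eq_fderiv_apply (hXP z)]
  · exact (hint z k i).2.2
  · exact eq_neg_of_add_eq_zero_left (hint z k i).1
  · exact neg_eq_of_add_eq_zero_left (hint z i k).1
  · exact (hint z k i).2.1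

theorem candidateHD_eq_radialPotential (XQ XP : PhaseSpace d → Fin d → ℝ) :
    candidateHD d XQ XP = radialPotential (symplecticOneForm XQ XP) := rfl

theorem contDiff_candidateHD {XQ XP : PhaseSpace d → Fin d → ℝ} (hXQ : ContDiff ℝ 1 XQ)
    (hXP : ContDiff ℝ 1 XP) (hint : HamIntegrability d XQ XP) :
    ContDiff ℝ 2 (candidateHD d XQ XP) := by
  rw [candidateHD_eq_radialPotential]
  exact contDiff_radialPotential (contDiff_symplecticOneForm hXQ hXP)
    (fderiv_symplecticOneForm_comm (hXQ.differentiable one_ne_zero)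
      (hXP.differentiable one_ne_zero) hint)

theorem isHamiltonianVectorField_candidateHD {XQ XP : PhaseSpace d → Fin d → ℝ}
    (hXQ : ContDiff ℝ 1 XQ) (hXP : ContDiff ℝ 1 XP) (hint : HamIntegrability d XQ XP) :
    IsHamiltonianVectorField (candidateHD d XQ XP) XQ XP := by
  have hD : ∀ z, fderiv ℝ (candidateHD d XQ XP) z = symplecticOneForm XQ XP z := fun z => by
    rw [candidateHD_eq_radialPotential]
    exact (hasFDerivAt_radialPotential (contDiff_symplecticOneForm hXQ hXP)
      (fderiv_symplecticOneForm_comm (hXQ.differentiable one_ne_zero)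
        (hXP.differentiable one_ne_zero) hint) z).fderiv
  intro z i
  simp only [pdp, pdq, hD, symplecticOneForm, symplecticPairing_single_fst,
    symplecticPairing_single_snd, neg_neg, and_self]

theorem hamIntegrability_of_isHamiltonianVectorField {H : PhaseSpace d → ℝ}
    (hH : ContDiff ℝ 2 H) {XQ XP : PhaseSpace d → Fin d → ℝ}
    (hX : IsHamiltonianVectorField H XQ XP) : HamIntegrability d XQ XP := by
  obtain rfl : XQ = fun w i => pdp d H i w := funext fun w => funext fun i => (hX w i).1
  obtain rfl : XP = fun w i => -pdq d H i w := funext fun w => funext fun i => (hX w i).2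
  intro z i k
  simp only [pdq, pdp, fderiv_fun_neg, neg_apply]
  refine ⟨?_, fderiv_fderiv_apply_comm hH z _ _, by rw [fderiv_fderiv_apply_comm hH z]⟩
  rw [fderiv_fderiv_apply_comm hH z, add_neg_eq_zero]

variable {n : ℕ} {XQS XPS : PhaseSpace d → Fin d → Fin n → ℝ}

theorem stochIntegrability_iff :
    StochIntegrability d n XQS XPS ↔
      ∀ j, HamIntegrability d (fun w i => XQS w i j) (fun w i => XPS w i j) :=
  ⟨fun h j z i k => h z i k j, fun h z i k j => h j z i k⟩

theorem contDiff_candidateHS (hXQS : ContDiff ℝ 1 XQS) (hXPS : ContDiff ℝ 1 XPS)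
    (hint : StochIntegrability d n XQS XPS) : ContDiff ℝ 2 (candidateHS d n XQS XPS) :=
  contDiff_pi.2 fun j =>
    contDiff_candidateHD (by fun_prop) (by fun_prop) (stochIntegrability_iff.1 hint j)

theorem isHamiltonianVectorField_candidateHS (hXQS : ContDiff ℝ 1 XQS)
    (hXPS : ContDiff ℝ 1 XPS) (hint : StochIntegrability d n XQS XPS) (j : Fin n) :
    IsHamiltonianVectorField (fun w => candidateHS d n XQS XPS w j)
      (fun w i => XQS w i j) (fun w i => XPS w i j) :=
  isHamiltonianVectorField_candidateHD (by fun_prop) (by fun_prop)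
    (stochIntegrability_iff.1 hint j)

end PhaseSpace

theorem stmt7_general (d n : ℕ)
    (XQD XPD : ((Fin d → ℝ) × (Fin d → ℝ)) → (Fin d → ℝ))
    (XQS XPS : ((Fin d → ℝ) × (Fin d → ℝ)) → Fin d → Fin n → ℝ)
    (hXQD : ContDiff ℝ 1 XQD) (hXPD : ContDiff ℝ 1 XPD)
    (hXQS : ContDiff ℝ 1 XQS) (hXPS : ContDiff ℝ 1 XPS) :
    ((∃ HD : ((Fin d → ℝ) × (Fin d → ℝ)) → ℝ,
      ∃ HS : ((Fin d → ℝ) × (Fin d → ℝ)) → Fin n → ℝ,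
        ContDiff ℝ 2 HD ∧ ContDiff ℝ 2 HS ∧
        (∀ (z : (Fin d → ℝ) × (Fin d → ℝ)) (i : Fin d),
          XQD z i = pdp d HD i z ∧ XPD z i = - pdq d HD i z) ∧
        (∀ (z : (Fin d → ℝ) × (Fin d → ℝ)) (i : Fin d) (j : Fin n),
          XQS z i j = pdp d (fun w => HS w j) i z ∧
          XPS z i j = - pdq d (fun w => HS w j) i z)) ↔
      (HamIntegrability d XQD XPD ∧ StochIntegrability d n XQS XPS)) ∧
    ((HamIntegrability d XQD XPD ∧ StochIntegrability d n XQS XPS) →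
      (ContDiff ℝ 2 (candidateHD d XQD XPD) ∧
        ContDiff ℝ 2 (candidateHS d n XQS XPS) ∧
        (∀ (z : (Fin d → ℝ) × (Fin d → ℝ)) (i : Fin d),
          XQD z i = pdp d (candidateHD d XQD XPD) i z ∧
          XPD z i = - pdq d (candidateHD d XQD XPD) i z) ∧
        (∀ (z : (Fin d → ℝ) × (Fin d → ℝ)) (i : Fin d) (j : Fin n),
          XQS z i j = pdp d (fun w => candidateHS d n XQS XPS w j) i z ∧
          XPS z i j = - pdq d (fun w => candidateHS d n XQS XPS w j) i z))) := by
  have hcandidates (h : HamIntegrability d XQD XPD ∧ StochIntegrability d n XQS XPS) :=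
    And.intro (contDiff_candidateHD hXQD hXPD h.1) <|
      And.intro (contDiff_candidateHS hXQS hXPS h.2) <|
      And.intro (isHamiltonianVectorField_candidateHD hXQD hXPD h.1)
        fun z i j => isHamiltonianVectorField_candidateHS hXQS hXPS h.2 j z i
  refine ⟨⟨fun ⟨HD, HS, hHD, hHS, hD, hS⟩ => ⟨?_, ?_⟩, fun h => ⟨_, _, hcandidates h⟩⟩, hcandidates⟩
  · exact hamIntegrability_of_isHamiltonianVectorField hHD hD
  · exact stochIntegrability_iff.2 fun j =>
      hamIntegrability_of_isHamiltonianVectorField (contDiff_pi.1 hHS j) fun z i => hS z i j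

/-- stochastic Hamiltonian Helmholtz theorem, coefficient level:
the drift and diffusion coefficients derive from potentials `H_D`, `H_S` iff the
drift pair satisfies the Hamiltonian integrability conditions and the diffusion
pair satisfies the stochastic integrability conditions; in the affirmative case
one may take the explicit candidates. -/
theorem stmt7 (d n : ℕ) (hd : 1 ≤ d)
    (XQD XPD : ((Fin d → ℝ) × (Fin d → ℝ)) → (Fin d → ℝ))
    (XQS XPS : ((Fin d → ℝ) × (Fin d → ℝ)) → Fin d → Fin n → ℝ)
    (hXQD : ContDiff ℝ 1 XQD) (hXPD : ContDiff ℝ 1 XPD)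
    (hXQS : ContDiff ℝ 1 XQS) (hXPS : ContDiff ℝ 1 XPS) :
    ((∃ HD : ((Fin d → ℝ) × (Fin d → ℝ)) → ℝ,
      ∃ HS : ((Fin d → ℝ) × (Fin d → ℝ)) → Fin n → ℝ,
        ContDiff ℝ 2 HD ∧ ContDiff ℝ 2 HS ∧
        (∀ (z : (Fin d → ℝ) × (Fin d → ℝ)) (i : Fin d),
          XQD z i = pdp d HD i z ∧ XPD z i = - pdq d HD i z) ∧
        (∀ (z : (Fin d → ℝ) × (Fin d → ℝ)) (i : Fin d) (j : Fin n),
          XQS z i j = pdp d (fun w => HS w j) i z ∧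
          XPS z i j = - pdq d (fun w => HS w j) i z)) ↔
      (HamIntegrability d XQD XPD ∧ StochIntegrability d n XQS XPS)) ∧
    ((HamIntegrability d XQD XPD ∧ StochIntegrability d n XQS XPS) →
      (ContDiff ℝ 2 (candidateHD d XQD XPD) ∧
        ContDiff ℝ 2 (candidateHS d n XQS XPS) ∧
        (∀ (z : (Fin d → ℝ) × (Fin d → ℝ)) (i : Fin d),
          XQD z i = pdp d (candidateHD d XQD XPD) i z ∧
          XPD z i = - pdq d (candidateHD d XQD XPD) i z) ∧
        (∀ (z : (Fin d → ℝ) × (Fin d → ℝ)) (i : Fin d) (j : Fin n),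
          XQS z i j = pdp d (fun w => candidateHS d n XQS XPS w j) i z ∧
          XPS z i j = - pdq d (fun w => candidateHS d n XQS XPS w j) i z))) :=
  stmt7_general d n XQD XPD XQS XPS hXQD hXPD hXQS hXPS
end
end

section
/- Let d ≥ 1, let H : ℝ^d × ℝ^d → ℝ be continuously differentiable, and let q, p : [a,b] → ℝ^d be continuously differentiable curves satisfying Hamilton's equations q̇(t) = ∂H/∂p (q(t), p(t)) and ṗ(t) = −∂H/∂q (q(t), p(t)) on [a,b]. Then for all continuously differentiable variations u, v : [a,b] → ℝ^d with u(a) = u(b) = 0 and v(a) = v(b) = 0, the first variation of the functional 𝓛_H(q,p) = ∫_a^b ( ⟨p(t), q̇(t)⟩ − H(q(t), p(t)) ) dt vanishes: d/dε|_{ε=0} 𝓛_H(q + εu, p + εv) = 0. -/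
noncomputable section

/-!
Perturbing `(q, p)` by `ε (u, v)` and differentiating under the integral sign, the first
variation is `∫ ⟨v, q̇⟩ + ⟨p, u̇⟩ - DH(q, p)(u, v)`. Splitting `DH(q, p)(u, v)` into
`⟨u, ∂H/∂q⟩ + ⟨v, ∂H/∂p⟩` and substituting Hamilton's equations, the integrand becomes
`⟨ṗ, u⟩ + ⟨p, u̇⟩ = d/dt ⟨p, u⟩`, which integrates to `⟨p, u⟩` evaluated between `a` and `b`,
that is to `0` since `u` vanishes at both ends.
-/

open intervalIntegral Matrix

theorem ContinuousLinearMap.apply_eq_sum_smul_single {ι R M : Type*} [Fintype ι] [DecidableEq ι]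
    [Semiring R] [TopologicalSpace R] [AddCommMonoid M] [Module R M] [TopologicalSpace M]
    (L : (ι → R) →L[R] M) (x : ι → R) :
    L x = ∑ i, x i • L (Pi.single i 1) := by
  conv_lhs => rw [← Finset.univ_sum_single x, map_sum]
  refine Finset.sum_congr rfl fun i _ => ?_
  rw [← map_smul, ← Pi.single_smul', smul_eq_mul, mul_one]

theorem fderiv_apply_eq_dotProduct_pdq_add_dotProduct_pdp {d : ℕ}
    (H : (Fin d → ℝ) × (Fin d → ℝ) → ℝ) (z : (Fin d → ℝ) × (Fin d → ℝ)) (x y : Fin d → ℝ) :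
    fderiv ℝ H z (x, y) = x ⬝ᵥ (fun i => pdq d H i z) + y ⬝ᵥ (fun i => pdp d H i z) := by
  rw [← (fderiv ℝ H z).comp_inl_add_comp_inr, ContinuousLinearMap.apply_eq_sum_smul_single,
    ContinuousLinearMap.apply_eq_sum_smul_single]
  rfl

theorem HasDerivAt.dotProduct {ι : Type*} [Fintype ι] {𝕜 : Type*} [NontriviallyNormedField 𝕜]
    {f g : 𝕜 → ι → 𝕜} {f' g' : ι → 𝕜} {x : 𝕜}
    (hf : HasDerivAt f f' x) (hg : HasDerivAt g g' x) :
    HasDerivAt (fun y => f y ⬝ᵥ g y) (f' ⬝ᵥ g x + f x ⬝ᵥ g') x := by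
  simp only [_root_.dotProduct, ← Finset.sum_add_distrib]
  exact HasDerivAt.fun_sum fun i _ =>
    (hasDerivAt_pi.mp hf i).mul (hasDerivAt_pi.mp hg i)

theorem hasDerivAt_intervalIntegral_of_continuous_deriv {E : Type*} [NormedAddCommGroup E]
    [NormedSpace ℝ E] {F F' : ℝ → ℝ → E} (a b ε₀ : ℝ) (hF : Continuous fun z : ℝ × ℝ => F z.1 z.2)
    (hF' : Continuous fun z : ℝ × ℝ => F' z.1 z.2) (hderiv : ∀ ε t, HasDerivAt (F · t) (F' ε t) ε) :
    HasDerivAt (fun ε => ∫ t in a..b, F ε t) (∫ t in a..b, F' ε₀ t) ε₀ := by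
  have hFε (ε : ℝ) : Continuous (F ε) := hF.comp (Continuous.prodMk_right ε)
  obtain ⟨C, hC⟩ := ((isCompact_closedBall ε₀ 1).prod isCompact_uIcc).exists_bound_of_continuousOn
    (s := _ ×ˢ Set.uIcc a b) hF'.continuousOn
  refine (hasDerivAt_integral_of_dominated_loc_of_deriv_le (bound := fun _ => C)
    (Metric.ball_mem_nhds ε₀ one_pos) (.of_forall fun ε => (hFε ε).aestronglyMeasurable)
    ((hFε ε₀).intervalIntegrable a b)
    (hF'.comp (Continuous.prodMk_right ε₀)).aestronglyMeasurable ?_ intervalIntegrable_const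
    (.of_forall fun t _ ε _ => hderiv ε t)).2
  exact .of_forall fun t ht ε hε =>
    hC (ε, t) ⟨Metric.ball_subset_closedBall hε, Set.uIoc_subset_uIcc ht⟩

def action {d : ℕ} (H : (Fin d → ℝ) × (Fin d → ℝ) → ℝ) (q p : ℝ → Fin d → ℝ) (a b : ℝ) : ℝ :=
  ∫ t in a..b, p t ⬝ᵥ deriv q t - H (q t, p t)

theorem hasDerivAt_action_add_smul {d : ℕ} {H : (Fin d → ℝ) × (Fin d → ℝ) → ℝ}
    (hH : ContDiff ℝ 1 H) {q p u v : ℝ → Fin d → ℝ} (hq : ContDiff ℝ 1 q) (hp : ContDiff ℝ 1 p)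
    (hu : ContDiff ℝ 1 u) (hv : ContDiff ℝ 1 v) (a b : ℝ) :
    HasDerivAt (fun ε : ℝ => action H (q + ε • u) (p + ε • v) a b)
      (∫ t in a..b, v t ⬝ᵥ deriv q t + p t ⬝ᵥ deriv u t - fderiv ℝ H (q t, p t) (u t, v t)) 0 := by
  have hq₁ := hq.differentiable one_ne_zero
  have hu₁ := hu.differentiable one_ne_zero
  have hderiv (ε : ℝ) : deriv (q + ε • u) = deriv q + ε • deriv u :=
    funext fun t => ((hq₁ t).hasDerivAt.add ((hu₁ t).hasDerivAt.const_smul ε)).deriv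
  have hq' := hq.continuous_deriv le_rfl
  have hu' := hu.continuous_deriv le_rfl
  have hH' := hH.continuous_fderiv one_ne_zero
  have hH₀ := hH.continuous
  have hq₀ := hq.continuous
  have hp₀ := hp.continuous
  have hu₀ := hu.continuous
  have hv₀ := hv.continuous
  simp only [action, hderiv, Pi.add_apply, Pi.smul_apply]
  refine (hasDerivAt_intervalIntegral_of_continuous_deriv a b 0
    (F' := fun ε t => v t ⬝ᵥ (deriv q t + ε • deriv u t) + (p t + ε • v t) ⬝ᵥ deriv u t -
      fderiv ℝ H (q t + ε • u t, p t + ε • v t) (u t, v t)) ?_ ?_ ?_).congr_deriv (by simp)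
  · fun_prop
  · fun_prop
  · intro ε t
    have hline (x y : Fin d → ℝ) : HasDerivAt (fun ε : ℝ => x + ε • y) y ε := by
      simpa using ((hasDerivAt_id ε).smul_const y).const_add x
    exact ((hline _ _).dotProduct (hline _ _)).sub
      ((hH.differentiable one_ne_zero _).hasFDerivAt.comp_hasDerivAt ε
        ((hline _ _).prodMk (hline _ _)))

theorem hasDerivAt_dotProduct_of_hamilton {d : ℕ} {H : (Fin d → ℝ) × (Fin d → ℝ) → ℝ}
    {q p u v : ℝ → Fin d → ℝ} {t : ℝ} (hp : DifferentiableAt ℝ p t) (hu : DifferentiableAt ℝ u t)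
    (hamq : deriv q t = fun i => pdp d H i (q t, p t))
    (hamp : deriv p t = fun i => - pdq d H i (q t, p t)) :
    HasDerivAt (fun s => p s ⬝ᵥ u s)
      (v t ⬝ᵥ deriv q t + p t ⬝ᵥ deriv u t - fderiv ℝ H (q t, p t) (u t, v t)) t := by
  refine (hp.hasDerivAt.dotProduct hu.hasDerivAt).congr_deriv ?_
  rw [fderiv_apply_eq_dotProduct_pdq_add_dotProduct_pdp, hamq, hamp]
  change -(fun i => pdq d H i (q t, p t)) ⬝ᵥ u t + _ = _
  rw [neg_dotProduct, dotProduct_comm (u t)]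
  ring

theorem stmt10_general (d : ℕ) (a b : ℝ) (hab : a ≤ b)
    (H : ((Fin d → ℝ) × (Fin d → ℝ)) → ℝ) (hH : ContDiff ℝ 1 H)
    (q p : ℝ → Fin d → ℝ)
    (hq : ContDiff ℝ 1 q) (hp : ContDiff ℝ 1 p)
    (hamq : ∀ t ∈ Set.Icc a b, deriv q t = fun i => pdp d H i (q t, p t))
    (hamp : ∀ t ∈ Set.Icc a b, deriv p t = fun i => - pdq d H i (q t, p t)) :
    ∀ u v : ℝ → Fin d → ℝ, ContDiff ℝ 1 u → ContDiff ℝ 1 v →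
      u a = 0 → u b = 0 → v a = 0 → v b = 0 →
      deriv (fun ε : ℝ => ∫ t in a..b,
        ((∑ i, (p t i + ε * v t i) * (deriv (fun s => q s + ε • u s) t) i) -
          H (q t + ε • u t, p t + ε • v t))) 0 = 0 := by
  intro u v hu hv hua hub _ _
  change deriv (fun ε : ℝ => action H (q + ε • u) (p + ε • v) a b) 0 = 0
  have hintegrand : Continuous fun t =>
      v t ⬝ᵥ deriv q t + p t ⬝ᵥ deriv u t - fderiv ℝ H (q t, p t) (u t, v t) :=
    ((hv.continuous.dotProduct (hq.continuous_deriv le_rfl)).add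
      (hp.continuous.dotProduct (hu.continuous_deriv le_rfl))).sub
      (((hH.continuous_fderiv one_ne_zero).comp (hq.continuous.prodMk hp.continuous)).clm_apply
        (hu.continuous.prodMk hv.continuous))
  rw [(hasDerivAt_action_add_smul hH hq hp hu hv a b).deriv,
    integral_eq_sub_of_hasDerivAt (f := fun s => p s ⬝ᵥ u s) _ (hintegrand.intervalIntegrable a b)]
  · simp [hua, hub]
  · intro t ht
    rw [Set.uIcc_of_le hab] at ht
    exact hasDerivAt_dotProduct_of_hamilton (hp.differentiable one_ne_zero t)
      (hu.differentiable one_ne_zero t) (hamq t ht) (hamp t ht)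

/-- solutions of Hamilton's equations are critical points of the
functional `𝓛_H(q,p) = ∫_a^b (⟨p, q̇⟩ − H(q,p)) dt`: the first variation in any
C¹ direction `(u,v)` vanishing at the endpoints is zero. -/
theorem stmt10 (d : ℕ) (hd : 1 ≤ d) (a b : ℝ) (hab : a ≤ b)
    (H : ((Fin d → ℝ) × (Fin d → ℝ)) → ℝ) (hH : ContDiff ℝ 1 H)
    (q p : ℝ → Fin d → ℝ)
    (hq : ContDiff ℝ 1 q) (hp : ContDiff ℝ 1 p)
    (hamq : ∀ t ∈ Set.Icc a b, deriv q t = fun i => pdp d H i (q t, p t))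
    (hamp : ∀ t ∈ Set.Icc a b, deriv p t = fun i => - pdq d H i (q t, p t)) :
    ∀ u v : ℝ → Fin d → ℝ, ContDiff ℝ 1 u → ContDiff ℝ 1 v →
      u a = 0 → u b = 0 → v a = 0 → v b = 0 →
      deriv (fun ε : ℝ => ∫ t in a..b,
        ((∑ i, (p t i + ε * v t i) * (deriv (fun s => q s + ε • u s) t) i) -
          H (q t + ε • u t, p t + ε • v t))) 0 = 0 :=
  stmt10_general d a b hab H hH q p hq hp hamq hamp
end
end

section
/- Let d ≥ 1, a < b, and let X = (X_Q, X_P) : ℝ^d × ℝ^d → ℝ^d × ℝ^d be a continuously differentiable vector field. Suppose that for every pair of continuously differentiable curves q, p : [a,b] → ℝ^d and all C¹ curves u, v, f, g : [a,b] → ℝ^d vanishing at a and b, one has ∫_a^b ⟨ D(u,v)(t), J·(f(t),g(t)) ⟩ dt = ∫_a^b ⟨ D(f,g)(t), J·(u(t),v(t)) ⟩ dt, where D(u,v)(t) = ( u̇(t) − ∂X_Q/∂q (q(t),p(t)) u(t) − ∂X_Q/∂p (q(t),p(t)) v(t), v̇(t) − ∂X_P/∂q (q(t),p(t)) u(t)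 − ∂X_P/∂p (q(t),p(t)) v(t) ) and J = [[0, I_d], [−I_d, 0]]. Then X satisfies the Hamiltonian integrability conditions at every point of ℝ^d × ℝ^d. -/
/-!
Along a constant curve `(q, p) ≡ z` the operator `D` has constant coefficients,
`D w = ẇ - L w` with `L = DX(z)`. Testing self-adjointness with `w = φ·w₀`, `w' = φ·w₀'` for
a scalar bump `φ` vanishing at `a` and `b`, the terms in `φ φ'` integrate to zero (the
integrand is `(φ²/2)'`), and what is left is `∫ φ² · ω(L w₀, w₀') = ∫ φ² · ω(L w₀', w₀)`.
Hence `ω(L ·, ·)` is symmetric, i.e. `L` is a Hamiltonian matrix, and evaluating on pairs of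
coordinate vectors gives the three integrability conditions.
-/

noncomputable section

/-- The linearized (Fréchet derivative) operator
`D(u,v)(t) = (u̇ − A u − B v, v̇ − C u − E v)` along the curve `(q,p)`, where
`A = ∂X_Q/∂q`, `B = ∂X_Q/∂p`, `C = ∂X_P/∂q`, `E = ∂X_P/∂p` at `(q(t),p(t))`. -/
def Dop (d : ℕ) (XQ XP : ((Fin d → ℝ) × (Fin d → ℝ)) → (Fin d → ℝ))
    (q p u v : ℝ → Fin d → ℝ) (t : ℝ) : (Fin d → ℝ) × (Fin d → ℝ) :=
  (fun i => deriv u t i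
      - (∑ k, pdq d (fun w => XQ w i) k (q t, p t) * u t k)
      - (∑ k, pdp d (fun w => XQ w i) k (q t, p t) * v t k),
   fun i => deriv v t i
      - (∑ k, pdq d (fun w => XP w i) k (q t, p t) * u t k)
      - (∑ k, pdp d (fun w => XP w i) k (q t, p t) * v t k))

open Matrix

-- `⟨w, J w'⟩` with `J = [[0, I], [-I, 0]]`.
def symplecticForm {ι R : Type*} [Fintype ι] [CommRing R] (w w' : (ι → R) × (ι → R)) : R :=
  w.1 ⬝ᵥ w'.2 - w.2 ⬝ᵥ w'.1

section symplecticForm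

variable {ι R : Type*} [Fintype ι] [CommRing R]

lemma symplecticForm_sub_left (w₁ w₂ w' : (ι → R) × (ι → R)) :
    symplecticForm (w₁ - w₂) w' = symplecticForm w₁ w' - symplecticForm w₂ w' := by
  simp only [symplecticForm, Prod.fst_sub, Prod.snd_sub, sub_dotProduct]
  ring

lemma symplecticForm_smul_left (r : R) (w w' : (ι → R) × (ι → R)) :
    symplecticForm (r • w) w' = r * symplecticForm w w' := by
  simp only [symplecticForm, Prod.smul_fst, Prod.smul_snd, smul_dotProduct, smul_eq_mul]
  ring

lemma symplecticForm_smul_right (r : R) (w w' : (ι → R) × (ι → R)) :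
    symplecticForm w (r • w') = r * symplecticForm w w' := by
  simp only [symplecticForm, Prod.smul_fst, Prod.smul_snd, dotProduct_smul, smul_eq_mul]
  ring

end symplecticForm

def linearization (d : ℕ) (XQ XP : ((Fin d → ℝ) × (Fin d → ℝ)) → (Fin d → ℝ))
    (z w : (Fin d → ℝ) × (Fin d → ℝ)) : (Fin d → ℝ) × (Fin d → ℝ) :=
  (fun i => ∑ k, pdq d (fun w => XQ w i) k z * w.1 k + ∑ k, pdp d (fun w => XQ w i) k z * w.2 k,
   fun i => ∑ k, pdq d (fun w => XP w i) k z * w.1 k + ∑ k, pdp d (fun w => XP w i) k z * w.2 k)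

def IsSymplecticSelfAdjointAlong (d : ℕ) (a b : ℝ)
    (XQ XP : ((Fin d → ℝ) × (Fin d → ℝ)) → (Fin d → ℝ)) (q p : ℝ → Fin d → ℝ) : Prop :=
  ∀ u v f g : ℝ → Fin d → ℝ,
    ContDiff ℝ 1 u → ContDiff ℝ 1 v → ContDiff ℝ 1 f → ContDiff ℝ 1 g →
    u a = 0 → u b = 0 → v a = 0 → v b = 0 → f a = 0 → f b = 0 → g a = 0 → g b = 0 →
    (∫ t in a..b, symplecticForm (Dop d XQ XP q p u v t) (f t, g t)) =
      ∫ t in a..b, symplecticForm (Dop d XQ XP q p f g t) (u t, v t)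

lemma Dop_const_curve_smul {d : ℕ} (XQ XP : ((Fin d → ℝ) × (Fin d → ℝ)) → (Fin d → ℝ))
    (z w : (Fin d → ℝ) × (Fin d → ℝ)) {φ : ℝ → ℝ} {t : ℝ} (hφ : DifferentiableAt ℝ φ t) :
    Dop d XQ XP (fun _ => z.1) (fun _ => z.2) (fun s => φ s • w.1) (fun s => φ s • w.2) t =
      deriv φ t • w - φ t • linearization d XQ XP z w := by
  simp only [Dop, deriv_smul_const hφ, linearization]
  ext i <;>
    simp only [Prod.fst_sub, Prod.snd_sub, Prod.smul_fst, Prod.smul_snd, Pi.sub_apply,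
      Pi.smul_apply, smul_eq_mul, mul_add, Finset.mul_sum, Prod.mk.eta, mul_left_comm (φ t)] <;>
    ring

lemma integral_self_mul_deriv_eq_zero {φ : ℝ → ℝ} {a b : ℝ} (hφ : ContDiff ℝ 1 φ)
    (hφab : φ a = φ b) : ∫ t in a..b, φ t * deriv φ t = 0 := by
  have hsq : ∀ t ∈ Set.uIcc a b,
      HasDerivAt (fun s => φ s * φ s / 2) (φ t * deriv φ t) t := by
    intro t _
    have hφt := (hφ.differentiable one_ne_zero t).hasDerivAt
    exact ((hφt.mul hφt).div_const 2).congr_deriv (by ring)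
  rw [intervalIntegral.integral_eq_sub_of_hasDerivAt hsq
    ((hφ.continuous.mul (hφ.continuous_deriv le_rfl)).intervalIntegrable a b), hφab, sub_self]

lemma exists_contDiff_vanishing_integral_sq_pos {a b : ℝ} (hab : a < b) :
    ∃ φ : ℝ → ℝ, ContDiff ℝ 1 φ ∧ φ a = 0 ∧ φ b = 0 ∧ 0 < ∫ t in a..b, φ t ^ 2 := by
  refine ⟨fun t => (t - a) * (b - t), by fun_prop, by simp, by simp, ?_⟩
  refine intervalIntegral.intervalIntegral_pos_of_pos_on
    (Continuous.intervalIntegrable (by fun_prop) a b) (fun t ht => ?_) hab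
  have := mul_pos (sub_pos.2 ht.1) (sub_pos.2 ht.2)
  positivity

lemma integral_symplecticForm_Dop_const_curve_smul {d : ℕ} {a b : ℝ}
    (XQ XP : ((Fin d → ℝ) × (Fin d → ℝ)) → (Fin d → ℝ)) (z w w' : (Fin d → ℝ) × (Fin d → ℝ))
    {φ : ℝ → ℝ} (hφ : ContDiff ℝ 1 φ) (hφab : φ a = φ b) :
    (∫ t in a..b, symplecticForm
      (Dop d XQ XP (fun _ => z.1) (fun _ => z.2) (fun s => φ s • w.1) (fun s => φ s • w.2) t)
      (φ t • w'.1, φ t • w'.2)) =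
      -(∫ t in a..b, φ t ^ 2) * symplecticForm (linearization d XQ XP z w) w' := by
  have hintegrand : ∀ t, symplecticForm
      (Dop d XQ XP (fun _ => z.1) (fun _ => z.2) (fun s => φ s • w.1) (fun s => φ s • w.2) t)
      (φ t • w'.1, φ t • w'.2) =
      symplecticForm w w' * (φ t * deriv φ t) -
        symplecticForm (linearization d XQ XP z w) w' * φ t ^ 2 := by
    intro t
    rw [Dop_const_curve_smul XQ XP z w (hφ.differentiable one_ne_zero t), ← Prod.smul_mk,
      symplecticForm_smul_right, symplecticForm_sub_left, symplecticForm_smul_left,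
      symplecticForm_smul_left]
    ring
  simp_rw [hintegrand]
  rw [intervalIntegral.integral_sub, intervalIntegral.integral_const_mul,
    intervalIntegral.integral_const_mul, integral_self_mul_deriv_eq_zero hφ hφab]
  · ring
  all_goals exact Continuous.intervalIntegrable (by fun_prop) a b

lemma symplecticForm_linearization_symm {d : ℕ} {a b : ℝ} (hab : a < b)
    {XQ XP : ((Fin d → ℝ) × (Fin d → ℝ)) → (Fin d → ℝ)} {z : (Fin d → ℝ) × (Fin d → ℝ)}
    (hself : IsSymplecticSelfAdjointAlong d a b XQ XP (fun _ => z.1) (fun _ => z.2))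
    (w w' : (Fin d → ℝ) × (Fin d → ℝ)) :
    symplecticForm (linearization d XQ XP z w) w' =
      symplecticForm (linearization d XQ XP z w') w := by
  obtain ⟨φ, hφ, hφa, hφb, hφpos⟩ := exists_contDiff_vanishing_integral_sq_pos hab
  have h := hself (fun s => φ s • w.1) (fun s => φ s • w.2) (fun s => φ s • w'.1)
    (fun s => φ s • w'.2) (hφ.smul contDiff_const) (hφ.smul contDiff_const)
    (hφ.smul contDiff_const) (hφ.smul contDiff_const)
    (by simp [hφa]) (by simp [hφb]) (by simp [hφa]) (by simp [hφb])
    (by simp [hφa]) (by simp [hφb]) (by simp [hφa]) (by simp [hφb])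
  rw [integral_symplecticForm_Dop_const_curve_smul XQ XP z w w' hφ (hφa.trans hφb.symm),
    integral_symplecticForm_Dop_const_curve_smul XQ XP z w' w hφ (hφa.trans hφb.symm)] at h
  exact mul_left_cancel₀ (neg_ne_zero.2 hφpos.ne') h

theorem stmt13_general (d : ℕ) (a b : ℝ) (hab : a < b)
    (XQ XP : ((Fin d → ℝ) × (Fin d → ℝ)) → (Fin d → ℝ))
    (hself : ∀ q p : ℝ → Fin d → ℝ, ContDiff ℝ 1 q → ContDiff ℝ 1 p →
      ∀ u v f g : ℝ → Fin d → ℝ,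
      ContDiff ℝ 1 u → ContDiff ℝ 1 v → ContDiff ℝ 1 f → ContDiff ℝ 1 g →
      u a = 0 → u b = 0 → v a = 0 → v b = 0 →
      f a = 0 → f b = 0 → g a = 0 → g b = 0 →
      (∫ t in a..b,
        ((∑ i, (Dop d XQ XP q p u v t).1 i * g t i) -
          ∑ i, (Dop d XQ XP q p u v t).2 i * f t i)) =
      (∫ t in a..b,
        ((∑ i, (Dop d XQ XP q p f g t).1 i * v t i) -
          ∑ i, (Dop d XQ XP q p f g t).2 i * u t i))) :
    HamIntegrability d XQ XP := by
  intro z i k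
  have h := symplecticForm_linearization_symm hab
    (hself (fun _ => z.1) (fun _ => z.2) contDiff_const contDiff_const)
  refine ⟨?_, ?_, ?_⟩
  · simpa [symplecticForm, linearization, Pi.single_apply, eq_neg_iff_add_eq_zero] using
      h (Pi.single k 1, 0) (0, Pi.single i 1)
  · simpa [symplecticForm, linearization, Pi.single_apply] using
      h (0, Pi.single k 1) (0, Pi.single i 1)
  · simpa [symplecticForm, linearization, Pi.single_apply] using
      h (Pi.single k 1, 0) (Pi.single i 1, 0)

/-- if the linearized operator `D` along every pair of C¹ curves
`(q,p)` is self-adjoint with respect to the `L²` symplectic scalar product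
(for all C¹ directions vanishing at the endpoints), then the C¹ vector field
`X = (X_Q, X_P)` satisfies the Hamiltonian integrability conditions everywhere. -/
theorem stmt13 (d : ℕ) (hd : 1 ≤ d) (a b : ℝ) (hab : a < b)
    (XQ XP : ((Fin d → ℝ) × (Fin d → ℝ)) → (Fin d → ℝ))
    (hXQ : ContDiff ℝ 1 XQ) (hXP : ContDiff ℝ 1 XP)
    (hself : ∀ q p : ℝ → Fin d → ℝ, ContDiff ℝ 1 q → ContDiff ℝ 1 p →
      ∀ u v f g : ℝ → Fin d → ℝ,
      ContDiff ℝ 1 u → ContDiff ℝ 1 v → ContDiff ℝ 1 f → ContDiff ℝ 1 g →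
      u a = 0 → u b = 0 → v a = 0 → v b = 0 →
      f a = 0 → f b = 0 → g a = 0 → g b = 0 →
      (∫ t in a..b,
        ((∑ i, (Dop d XQ XP q p u v t).1 i * g t i) -
          ∑ i, (Dop d XQ XP q p u v t).2 i * f t i)) =
      (∫ t in a..b,
        ((∑ i, (Dop d XQ XP q p f g t).1 i * v t i) -
          ∑ i, (Dop d XQ XP q p f g t).2 i * u t i))) :
    HamIntegrability d XQ XP :=
  stmt13_general d a b hab XQ XP hself
end
end

section
/- Let d ≥ 1, a < b, and let X = (X_Q, X_P) : ℝ^d × ℝ^d → ℝ^d × ℝ^d be a continuously differentiable vector field. Fix C¹ curves q, p : [a,b] → ℝ^d and consider the map O sending a pair of C¹ curves (q,p) to the pair of continuous curves ( q̇ − X_Q(q,p), ṗ − X_P(q,p) ). Then O is Fréchet differentiable at (q,p) (with respect to the C¹ norm on the domain and the supremum norm on the codomain), and its derivative in the direction of C¹ curves (u,v) is given by DO(q,p)(u,v)(t) = ( u̇(t) − ∂X_Q/∂q (q(t),p(t)) u(t) − ∂X_Q/∂p (q(t),p(t)) v(t), v̇(t) − ∂X_P/∂q (q(t),p(t)) u(t)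 − ∂X_P/∂p (q(t),p(t)) v(t) ). -/
set_option synthInstance.maxHeartbeats 1000000
set_option maxHeartbeats 2000000

noncomputable section

/-- The Banach space of C¹ curves `[a,b] → E`, encoded as the submodule of
`C([a,b], E) × C([a,b], E)` consisting of pairs `(f, f')` such that `f'` is the
derivative of `f` on `[a,b]`.  The norm induced from the product of the sup
norms is (equivalent to) the C¹ norm `max(‖f‖_∞, ‖f'‖_∞)`. -/
def C1Space (a b : ℝ) (hab : a ≤ b) (E : Type*)
    [NormedAddCommGroup E] [NormedSpace ℝ E] :
    Submodule ℝ (C(Set.Icc a b, E) × C(Set.Icc a b, E)) where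
  carrier := {fg | ∀ (t : ℝ) (ht : t ∈ Set.Icc a b),
    HasDerivWithinAt (Set.IccExtend hab ⇑fg.1) (fg.2 ⟨t, ht⟩) (Set.Icc a b) t}
  add_mem' := by
    intro f g hf hg t ht
    exact (hf t ht).add (hg t ht)
  zero_mem' := by
    intro t ht
    exact hasDerivWithinAt_const t _ (0 : E)
  smul_mem' := by
    intro c f hf t ht
    exact (hf t ht).const_smul c

/-- Shortcut instance (the general instance search fails to fire). -/
instance C1SpaceProdNormedAddCommGroup (a b : ℝ) (hab : a ≤ b) (E : Type*)
    [NormedAddCommGroup E] [NormedSpace ℝ E] :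
    NormedAddCommGroup (↥(C1Space a b hab E) × ↥(C1Space a b hab E)) :=
  Prod.normedAddCommGroup

/-- Shortcut instance (the general instance search fails to fire). -/
instance C1SpaceProdNormedSpace (a b : ℝ) (hab : a ≤ b) (E : Type*)
    [NormedAddCommGroup E] [NormedSpace ℝ E] :
    NormedSpace ℝ (↥(C1Space a b hab E) × ↥(C1Space a b hab E)) :=
  Prod.normedSpace

/-!
The operator splits as `(u, v) ↦ (u̇, v̇)`, which is continuous linear, minus the superposition
operators `γ ↦ X_Q ∘ γ` and `γ ↦ X_P ∘ γ` applied to the curve `t ↦ (u t, v t)`. A superposition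
operator `γ ↦ X ∘ γ` on `C(K, F)`, `K` compact, is Fréchet differentiable for every `C¹` map `X`:
the first-order Taylor remainder `X (x + z) - X x - DX x z` is `o(‖z‖)` uniformly for `x` in the
compact range of `γ`, by Heine–Cantor for `DX` and the mean value inequality.
-/

theorem ContDiff.exists_pos_forall_norm_sub_sub_fderiv_le {F G : Type*} [NormedAddCommGroup F]
    [NormedSpace ℝ F] [NormedAddCommGroup G] [NormedSpace ℝ G] {X : F → G} (hX : ContDiff ℝ 1 X)
    {S : Set F} (hS : IsCompact S) {ε : ℝ} (hε : 0 < ε) :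
    ∃ δ > 0, ∀ x ∈ S, ∀ z : F, ‖z‖ < δ →
      ‖X (x + z) - X x - fderiv ℝ X x z‖ ≤ ε * ‖z‖ := by
  have hcont := hX.continuous_fderiv one_ne_zero
  obtain ⟨δ, hδ, hclose⟩ := Metric.mem_uniformity_dist.mp <|
    hS.uniformContinuousAt_of_continuousAt (fderiv ℝ X) (fun x _ => hcont.continuousAt)
      (Metric.dist_mem_uniformity hε)
  refine ⟨δ, hδ, fun x hx z hz => ?_⟩
  have hbound : ∀ y ∈ Metric.ball x δ, ‖fderiv ℝ X y - fderiv ℝ X x‖ ≤ ε := fun y hy => by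
    rw [← dist_eq_norm, dist_comm]
    exact (hclose (Metric.mem_ball'.mp hy) hx).le
  simpa using (convex_ball x δ).norm_image_sub_le_of_norm_fderiv_le'
    (fun y _ => (hX.differentiable one_ne_zero).differentiableAt) hbound
    (Metric.mem_ball_self hδ) (y := x + z) (by simpa using hz)

namespace ContinuousMap

variable {K : Type*} [TopologicalSpace K] [CompactSpace K] {𝕜 : Type*} [NontriviallyNormedField 𝕜]
  {E₁ E₂ F G : Type*} [NormedAddCommGroup E₁] [NormedSpace 𝕜 E₁] [NormedAddCommGroup E₂]
  [NormedSpace 𝕜 E₂] [NormedAddCommGroup F] [NormedSpace 𝕜 F] [NormedAddCommGroup G]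
  [NormedSpace 𝕜 G]

variable (K 𝕜 E₁ E₂) in
def prodMkCLM : C(K, E₁) × C(K, E₂) →L[𝕜] C(K, E₁ × E₂) :=
  LinearMap.mkContinuous
    { toFun := fun fg => fg.1.prodMk fg.2
      map_add' := fun _ _ => rfl
      map_smul' := fun _ _ => rfl }
    1 fun fg => by
      rw [one_mul]
      exact (ContinuousMap.norm_le _ (norm_nonneg _)).2 fun t =>
        max_le_max (fg.1.norm_coe_le_norm t) (fg.2.norm_coe_le_norm t)

def pointwiseApplyCLM (A : C(K, F →L[𝕜] G)) : C(K, F) →L[𝕜] C(K, G) :=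
  LinearMap.mkContinuous
    { toFun := fun f => ⟨fun t => A t (f t), A.continuous.clm_apply f.continuous⟩
      map_add' := fun f g => by ext t; simp
      map_smul' := fun c f => by ext t; simp }
    ‖A‖ fun f => (ContinuousMap.norm_le _ (by positivity)).2 fun t =>
      ((A t).le_opNorm _).trans <|
        mul_le_mul (A.norm_coe_le_norm t) (f.norm_coe_le_norm t) (norm_nonneg _) (by positivity)

end ContinuousMap

open ContinuousMap in
theorem ContDiff.hasFDerivAt_comp_continuousMap {K F G : Type*} [TopologicalSpace K]
    [CompactSpace K] [NormedAddCommGroup F] [NormedSpace ℝ F] [NormedAddCommGroup G]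
    [NormedSpace ℝ G] {X : F → G} (hX : ContDiff ℝ 1 X) (f : C(K, F)) :
    HasFDerivAt (fun g : C(K, F) => (⟨X, hX.continuous⟩ : C(F, G)).comp g)
      (pointwiseApplyCLM ⟨fun t => fderiv ℝ X (f t),
        (hX.continuous_fderiv one_ne_zero).comp f.continuous⟩) f := by
  rw [hasFDerivAt_iff_isLittleO_nhds_zero, Asymptotics.isLittleO_iff]
  intro ε hε
  obtain ⟨δ, hδ, htaylor⟩ :=
    hX.exists_pos_forall_norm_sub_sub_fderiv_le (isCompact_range f.continuous) hε
  filter_upwards [Metric.ball_mem_nhds 0 hδ] with g hg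
  rw [mem_ball_zero_iff] at hg
  refine (ContinuousMap.norm_le _ (by positivity)).2 fun t => ?_
  change ‖X (f t + g t) - X (f t) - fderiv ℝ X (f t) (g t)‖ ≤ ε * ‖g‖
  calc ‖X (f t + g t) - X (f t) - fderiv ℝ X (f t) (g t)‖ ≤ ε * ‖g t‖ :=
        htaylor _ (Set.mem_range_self t) _ ((g.norm_coe_le_norm t).trans_lt hg)
    _ ≤ ε * ‖g‖ := by gcongr; exact g.norm_coe_le_norm t

namespace C1Space

variable (a b : ℝ) (hab : a ≤ b) (E : Type*) [NormedAddCommGroup E] [NormedSpace ℝ E]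

def valCLM : C1Space a b hab E →L[ℝ] C(Set.Icc a b, E) :=
  ContinuousLinearMap.fst ℝ _ _ ∘L (C1Space a b hab E).subtypeL

def derivCLM : C1Space a b hab E →L[ℝ] C(Set.Icc a b, E) :=
  ContinuousLinearMap.snd ℝ _ _ ∘L (C1Space a b hab E).subtypeL

end C1Space

open ContinuousMap C1Space in
theorem stmt14_general (d : ℕ) (a b : ℝ) (hab : a < b)
    (XQ XP : ((Fin d → ℝ) × (Fin d → ℝ)) → (Fin d → ℝ))
    (hXQ : ContDiff ℝ 1 XQ) (hXP : ContDiff ℝ 1 XP)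
    (QP : ↥(C1Space a b hab.le (Fin d → ℝ)) × ↥(C1Space a b hab.le (Fin d → ℝ)))
    (O : (↥(C1Space a b hab.le (Fin d → ℝ)) × ↥(C1Space a b hab.le (Fin d → ℝ))) →
      C(Set.Icc a b, Fin d → ℝ) × C(Set.Icc a b, Fin d → ℝ))
    (hO : ∀ uv, ∀ t : Set.Icc a b,
      (O uv).1 t = uv.1.val.2 t - XQ (uv.1.val.1 t, uv.2.val.1 t) ∧
      (O uv).2 t = uv.2.val.2 t - XP (uv.1.val.1 t, uv.2.val.1 t)) :
    ∃ L : (↥(C1Space a b hab.le (Fin d → ℝ)) × ↥(C1Space a b hab.le (Fin d → ℝ))) →L[ℝ]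
        (C(Set.Icc a b, Fin d → ℝ) × C(Set.Icc a b, Fin d → ℝ)),
      (∀ uv, ∀ t : Set.Icc a b,
        (L uv).1 t = uv.1.val.2 t -
          fderiv ℝ XQ (QP.1.val.1 t, QP.2.val.1 t) (uv.1.val.1 t, uv.2.val.1 t) ∧
        (L uv).2 t = uv.2.val.2 t -
          fderiv ℝ XP (QP.1.val.1 t, QP.2.val.1 t) (uv.1.val.1 t, uv.2.val.1 t)) ∧
      HasFDerivAt O L QP := by
  let curve : C1Space a b hab.le (Fin d → ℝ) × C1Space a b hab.le (Fin d → ℝ) →L[ℝ]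
      C(Set.Icc a b, (Fin d → ℝ) × (Fin d → ℝ)) :=
    prodMkCLM _ ℝ _ _ ∘L (valCLM a b hab.le _).prodMap (valCLM a b hab.le _)
  let D := derivCLM a b hab.le (Fin d → ℝ)
  have hO_eq : O = fun uv => (D uv.1 - (⟨XQ, hXQ.continuous⟩ : C(_, _)).comp (curve uv),
      D uv.2 - (⟨XP, hXP.continuous⟩ : C(_, _)).comp (curve uv)) := by
    funext uv
    exact Prod.ext (ContinuousMap.ext fun t => (hO uv t).1) (ContinuousMap.ext fun t => (hO uv t).2)
  have hQ := (hXQ.hasFDerivAt_comp_continuousMap (curve QP)).comp QP curve.hasFDerivAt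
  have hP := (hXP.hasFDerivAt_comp_continuousMap (curve QP)).comp QP curve.hasFDerivAt
  subst hO_eq
  exact ⟨_, fun uv t => ⟨rfl, rfl⟩,
    ((D ∘L .fst ℝ _ _).hasFDerivAt.sub hQ).prodMk ((D ∘L .snd ℝ _ _).hasFDerivAt.sub hP)⟩

/-- the differential operator `O(q,p) = (q̇ − X_Q(q,p), ṗ − X_P(q,p))`,
acting on pairs of C¹ curves on `[a,b]` (with the C¹ norm) with values in pairs of
continuous curves with the supremum norm, is Fréchet differentiable at any point
`(q,p)`, with derivative
`DO(q,p)(u,v) = (u̇ − ∂X_Q/∂q u − ∂X_Q/∂p v, v̇ − ∂X_P/∂q u − ∂X_P/∂p v)`,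
i.e. `(u̇ − (DX_Q)(q,p)·(u,v), v̇ − (DX_P)(q,p)·(u,v))`. -/
theorem stmt14 (d : ℕ) (hd : 1 ≤ d) (a b : ℝ) (hab : a < b)
    (XQ XP : ((Fin d → ℝ) × (Fin d → ℝ)) → (Fin d → ℝ))
    (hXQ : ContDiff ℝ 1 XQ) (hXP : ContDiff ℝ 1 XP)
    (QP : ↥(C1Space a b hab.le (Fin d → ℝ)) × ↥(C1Space a b hab.le (Fin d → ℝ)))
    (O : (↥(C1Space a b hab.le (Fin d → ℝ)) × ↥(C1Space a b hab.le (Fin d → ℝ))) →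
      C(Set.Icc a b, Fin d → ℝ) × C(Set.Icc a b, Fin d → ℝ))
    (hO : ∀ uv, ∀ t : Set.Icc a b,
      (O uv).1 t = uv.1.val.2 t - XQ (uv.1.val.1 t, uv.2.val.1 t) ∧
      (O uv).2 t = uv.2.val.2 t - XP (uv.1.val.1 t, uv.2.val.1 t)) :
    ∃ L : (↥(C1Space a b hab.le (Fin d → ℝ)) × ↥(C1Space a b hab.le (Fin d → ℝ))) →L[ℝ]
        (C(Set.Icc a b, Fin d → ℝ) × C(Set.Icc a b, Fin d → ℝ)),
      (∀ uv, ∀ t : Set.Icc a b,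
        (L uv).1 t = uv.1.val.2 t -
          fderiv ℝ XQ (QP.1.val.1 t, QP.2.val.1 t) (uv.1.val.1 t, uv.2.val.1 t) ∧
        (L uv).2 t = uv.2.val.2 t -
          fderiv ℝ XP (QP.1.val.1 t, QP.2.val.1 t) (uv.1.val.1 t, uv.2.val.1 t)) ∧
      HasFDerivAt O L QP :=
  stmt14_general d a b hab XQ XP hXQ hXP QP O hO
end
end
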